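/- arXiv:1604.02639 — 2 statements merged into one kernel-verified Lean document; each statement's English description precedes it below -/
import Mathlib

section
/- Let f : ℝᵖ → ℝ be convex and h₁,…,hₚ : ℝⁿ → ℝ satisfy the DCP composition rule for f. If I_f denotes the indicator of the domain of f and I_{hⱼ} the indicators of the domains of hⱼ, then the indicator of the domain of x ↦ f(h₁(x),…,hₚ(x)) equals I_f(h₁(x),…,hₚ(x)) + ∑ⱼ I_{hⱼ}(x), and this function is convex. -/
/-!
A point lies in the domain of the composition iff every `hⱼ` is defined there and the vector of
values lies in `dom f`, which gives the splitting of the indicator; its convexity amounts to the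
convexity of that domain. Given `x, y` in it and `z = a x + b y`, start from the combination
`a h(x) + b h(y) ∈ dom f` and replace one coordinate at a time by `hⱼ(z)`: for convex `hⱼ` this
lowers the coordinate, and `dom f` is closed downwards in it because the extended-value `f`
(equal to `⊤` off its domain) is nondecreasing there; concave `hⱼ` is symmetric and affine `hⱼ`
leaves the coordinate unchanged.
-/

open scoped Classical

open Function

section CoordinateClosure

variable {ι 𝕜 : Type*}

def IsLowerSetAt [Preorder 𝕜] (D : Set (ι → 𝕜)) (j : ι) : Prop :=
  ∀ ⦃u v : ι → 𝕜⦄, (∀ k, k ≠ j → u k = v k) → u j ≤ v j → v ∈ D → u ∈ D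

def IsUpperSetAt [Preorder 𝕜] (D : Set (ι → 𝕜)) (j : ι) : Prop :=
  ∀ ⦃u v : ι → 𝕜⦄, (∀ k, k ≠ j → u k = v k) → u j ≤ v j → u ∈ D → v ∈ D

variable [DecidableEq ι] [Preorder 𝕜] {D : Set (ι → 𝕜)} {j : ι} {m : ι → 𝕜} {t : 𝕜}

theorem IsLowerSetAt.update_mem (hD : IsLowerSetAt D j) (hm : m ∈ D) (ht : t ≤ m j) :
    update m j t ∈ D :=
  hD (fun _ hk => update_of_ne hk _ _) (by rwa [update_self]) hm

theorem IsUpperSetAt.update_mem (hD : IsUpperSetAt D j) (hm : m ∈ D) (ht : m j ≤ t) :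
    update m j t ∈ D :=
  hD (fun _ hk => (update_of_ne hk _ _).symm) (by rwa [update_self]) hm

end CoordinateClosure

theorem mem_of_update_mem {ι α : Type*} [Fintype ι] [DecidableEq ι] {D : Set (ι → α)}
    {u v : ι → α} (hu : u ∈ D) (hstep : ∀ j, ∀ m ∈ D, m j = u j → update m j (v j) ∈ D) :
    v ∈ D := by
  have hpiecewise : ∀ s : Finset ι, s.piecewise v u ∈ D := by
    intro s
    induction s using Finset.induction_on with
    | empty => simpa using hu
    | insert j s hj ih =>
      rw [Finset.piecewise_insert]
      exact hstep j _ ih (Finset.piecewise_eq_of_notMem _ _ _ hj)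
  simpa using hpiecewise Finset.univ

section Composition

variable {ι 𝕜 E : Type*} [Field 𝕜] [LinearOrder 𝕜] [IsStrictOrderedRing 𝕜]
  [AddCommGroup E] [Module 𝕜 E]

/-- The DCP composition rule for the `j`-th argument, in terms of the domain `D` of the outer
function only. -/
def CompositionRuleAt (D : Set (ι → 𝕜)) (j : ι) (C : Set E) (g : E → 𝕜) : Prop :=
  (ConvexOn 𝕜 C g ∧ IsLowerSetAt D j) ∨ (ConcaveOn 𝕜 C g ∧ IsUpperSetAt D j) ∨
    ∃ (w : E →ₗ[𝕜] 𝕜) (c : 𝕜), g = fun x => w x + c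

theorem CompositionRuleAt.update_mem [DecidableEq ι] {D : Set (ι → 𝕜)} {j : ι} {C : Set E}
    {g : E → 𝕜} (hrule : CompositionRuleAt D j C g) {x y : E} (hx : x ∈ C) (hy : y ∈ C)
    {a b : 𝕜} (ha : 0 ≤ a) (hb : 0 ≤ b) (hab : a + b = 1) {m : ι → 𝕜} (hm : m ∈ D)
    (hmj : m j = a * g x + b * g y) : update m j (g (a • x + b • y)) ∈ D := by
  rcases hrule with ⟨hconv, hlower⟩ | ⟨hconc, hupper⟩ | ⟨w, c, rfl⟩
  · exact hlower.update_mem hm (hmj ▸ hconv.2 hx hy ha hb hab)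
  · exact hupper.update_mem hm (hmj ▸ hconc.2 hx hy ha hb hab)
  · dsimp only at hmj ⊢
    have haffine : w (a • x + b • y) + c = m j := by
      rw [hmj, map_add, map_smul, map_smul, smul_eq_mul, smul_eq_mul]
      linear_combination (-c) * hab
    rw [haffine, update_eq_self]
    exact hm

theorem convex_compositionDomain [Fintype ι] {D : Set (ι → 𝕜)} (hD : Convex 𝕜 D)
    {C : ι → Set E} (hC : ∀ j, Convex 𝕜 (C j)) {h : ι → E → 𝕜}
    (hrule : ∀ j, CompositionRuleAt D j (C j) (h j)) :
    Convex 𝕜 {x | (∀ j, x ∈ C j) ∧ (fun j => h j x) ∈ D} := by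
  rintro x ⟨hxC, hxD⟩ y ⟨hyC, hyD⟩ a b ha hb hab
  refine ⟨fun j => hC j (hxC j) (hyC j) ha hb hab, ?_⟩
  refine mem_of_update_mem (hD hxD hyD ha hb hab) fun j m hm hmj => ?_
  exact (hrule j).update_mem (hxC j) (hyC j) ha hb hab hm hmj

end Composition

section ExtendedValue

theorem mem_of_extend_le_extend {α : Type*} {D : Set α} {f : α → ℝ} {u v : α}
    (hle : (if u ∈ D then (f u : EReal) else ⊤) ≤ (if v ∈ D then (f v : EReal) else ⊤))
    (hv : v ∈ D) : u ∈ D := by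
  by_contra hu
  simp [hu, hv] at hle

variable {ι : Type*} {D : Set (ι → ℝ)} {f : (ι → ℝ) → ℝ} {j : ι}

theorem isLowerSetAt_of_extend_monotone
    (hmono : ∀ u v : ι → ℝ, (∀ k, k ≠ j → u k = v k) → u j ≤ v j →
      (if u ∈ D then (f u : EReal) else ⊤) ≤ (if v ∈ D then (f v : EReal) else ⊤)) :
    IsLowerSetAt D j :=
  fun u v huv hle hv => mem_of_extend_le_extend (hmono u v huv hle) hv

theorem isUpperSetAt_of_extend_antitone
    (hanti : ∀ u v : ι → ℝ, (∀ k, k ≠ j → u k = v k) → u j ≤ v j →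
      (if v ∈ D then (f v : EReal) else ⊤) ≤ (if u ∈ D then (f u : EReal) else ⊤)) :
    IsUpperSetAt D j :=
  fun u v huv hle hu => mem_of_extend_le_extend (hanti u v huv hle) hu

end ExtendedValue

section Indicator

theorem EReal.sum_ite_zero_top {ι : Type*} [Fintype ι] (P : ι → Prop) [DecidablePred P] :
    ∑ j, (if P j then (0 : EReal) else ⊤) = if ∀ j, P j then 0 else ⊤ := by
  by_cases hP : ∀ j, P j
  · simp [hP]
  · obtain ⟨j, hj⟩ := not_forall.mp hP
    rw [if_neg hP, ← top_le_iff]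
    calc (⊤ : EReal) = if P j then 0 else ⊤ := by rw [if_neg hj]
      _ ≤ ∑ j, (if P j then (0 : EReal) else ⊤) :=
        Finset.single_le_sum (f := fun i => if P i then (0 : EReal) else ⊤)
          (fun i _ => by split_ifs <;> simp) (Finset.mem_univ j)

theorem EReal.ite_and_zero_top (P Q : Prop) [Decidable P] [Decidable Q] :
    (if P ∧ Q then (0 : EReal) else ⊤) = (if Q then 0 else ⊤) + (if P then 0 else ⊤) := by
  by_cases hP : P <;> by_cases hQ : Q <;> simp [hP, hQ]

theorem EReal.coe_mul_ite_zero_top {a : ℝ} (ha : 0 < a) (P : Prop) [Decidable P] :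
    (a : EReal) * (if P then 0 else ⊤) = if P then 0 else ⊤ := by
  split_ifs
  · exact mul_zero _
  · exact EReal.coe_mul_top_of_pos ha

theorem Convex.ereal_indicator_le {E : Type*} [AddCommGroup E] [Module ℝ E] {s : Set E}
    [DecidablePred (· ∈ s)] (hs : Convex ℝ s) {x y : E} {a b : ℝ} (ha : 0 ≤ a) (hb : 0 ≤ b)
    (hab : a + b = 1) :
    (if a • x + b • y ∈ s then (0 : EReal) else ⊤)
      ≤ (a : EReal) * (if x ∈ s then 0 else ⊤) + (b : EReal) * (if y ∈ s then 0 else ⊤) := by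
  rcases ha.eq_or_lt with rfl | ha
  · obtain rfl : b = 1 := by linarith
    simp
  rcases hb.eq_or_lt with rfl | hb
  · obtain rfl : a = 1 := by linarith
    simp
  rw [EReal.coe_mul_ite_zero_top ha, EReal.coe_mul_ite_zero_top hb, ← EReal.ite_and_zero_top]
  by_cases hxy : y ∈ s ∧ x ∈ s
  · rw [if_pos (hs hxy.2 hxy.1 ha.le hb.le hab), if_pos hxy]
  · rw [if_neg hxy]
    exact le_top

end Indicator

theorem composition_domain_indicator_general {n p : ℕ}
    (f : (Fin p → ℝ) → ℝ) (Df : Set (Fin p → ℝ)) (hDf : Convex ℝ Df)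
    (h : Fin p → EuclideanSpace ℝ (Fin n) → ℝ)
    (Dh : Fin p → Set (EuclideanSpace ℝ (Fin n)))
    (hDh : ∀ j, Convex ℝ (Dh j))
    (hcomp : ∀ j : Fin p,
      (ConvexOn ℝ (Dh j) (h j) ∧
        ∀ (u v : Fin p → ℝ), (∀ k, k ≠ j → u k = v k) → u j ≤ v j →
          (if u ∈ Df then ((f u : ℝ) : EReal) else ⊤)
            ≤ (if v ∈ Df then ((f v : ℝ) : EReal) else ⊤)) ∨
      (ConcaveOn ℝ (Dh j) (h j) ∧
        ∀ (u v : Fin p → ℝ), (∀ k, k ≠ j → u k = v k) → u j ≤ v j →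
          (if v ∈ Df then ((f v : ℝ) : EReal) else ⊤)
            ≤ (if u ∈ Df then ((f u : ℝ) : EReal) else ⊤)) ∨
      (∃ (w : EuclideanSpace ℝ (Fin n) →ₗ[ℝ] ℝ) (c : ℝ),
        h j = fun x => w x + c)) :
    -- the indicator of the domain of the composition splits as a sum
    ((fun x : EuclideanSpace ℝ (Fin n) =>
        (if ((∀ j, x ∈ Dh j) ∧ (fun j => h j x) ∈ Df) then (0 : EReal) else ⊤))
      = fun x =>
        (if (fun j => h j x) ∈ Df then (0 : EReal) else ⊤)
          + ∑ j : Fin p, (if x ∈ Dh j then (0 : EReal) else ⊤)) ∧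
    -- and this indicator is a convex (extended-real-valued) function
    (∀ x y : EuclideanSpace ℝ (Fin n), ∀ a b : ℝ,
      0 ≤ a → 0 ≤ b → a + b = 1 →
      (if ((∀ j, a • x + b • y ∈ Dh j) ∧ (fun j => h j (a • x + b • y)) ∈ Df)
          then (0 : EReal) else ⊤)
        ≤ (a : EReal) * (if ((∀ j, x ∈ Dh j) ∧ (fun j => h j x) ∈ Df)
            then (0 : EReal) else ⊤)
          + (b : EReal) * (if ((∀ j, y ∈ Dh j) ∧ (fun j => h j y) ∈ Df)
            then (0 : EReal) else ⊤)) := by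
  have hrule : ∀ j, CompositionRuleAt Df j (Dh j) (h j) := fun j =>
    (hcomp j).imp (And.imp_right isLowerSetAt_of_extend_monotone)
      (Or.imp_left (And.imp_right isUpperSetAt_of_extend_antitone))
  refine ⟨funext fun x => ?_, fun x y a b ha hb hab => ?_⟩
  · rw [EReal.sum_ite_zero_top, EReal.ite_and_zero_top]
    -- the two sides differ only in the `Decidable` instance of `∀ j, x ∈ Dh j`
    congr
  · exact (convex_compositionDomain hDf hDh hrule).ereal_indicator_le ha hb hab

theorem composition_domain_indicator {n p : ℕ}
    (f : (Fin p → ℝ) → ℝ) (Df : Set (Fin p → ℝ)) (hDf : Convex ℝ Df)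
    (hf : ConvexOn ℝ Df f)
    (h : Fin p → EuclideanSpace ℝ (Fin n) → ℝ)
    (Dh : Fin p → Set (EuclideanSpace ℝ (Fin n)))
    (hDh : ∀ j, Convex ℝ (Dh j))
    (hcomp : ∀ j : Fin p,
      (ConvexOn ℝ (Dh j) (h j) ∧
        ∀ (u v : Fin p → ℝ), (∀ k, k ≠ j → u k = v k) → u j ≤ v j →
          (if u ∈ Df then ((f u : ℝ) : EReal) else ⊤)
            ≤ (if v ∈ Df then ((f v : ℝ) : EReal) else ⊤)) ∨
      (ConcaveOn ℝ (Dh j) (h j) ∧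
        ∀ (u v : Fin p → ℝ), (∀ k, k ≠ j → u k = v k) → u j ≤ v j →
          (if v ∈ Df then ((f v : ℝ) : EReal) else ⊤)
            ≤ (if u ∈ Df then ((f u : ℝ) : EReal) else ⊤)) ∨
      (∃ (w : EuclideanSpace ℝ (Fin n) →ₗ[ℝ] ℝ) (c : ℝ),
        h j = fun x => w x + c)) :
    -- the indicator of the domain of the composition splits as a sum
    ((fun x : EuclideanSpace ℝ (Fin n) =>
        (if ((∀ j, x ∈ Dh j) ∧ (fun j => h j x) ∈ Df) then (0 : EReal) else ⊤))
      = fun x =>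
        (if (fun j => h j x) ∈ Df then (0 : EReal) else ⊤)
          + ∑ j : Fin p, (if x ∈ Dh j then (0 : EReal) else ⊤)) ∧
    -- and this indicator is a convex (extended-real-valued) function
    (∀ x y : EuclideanSpace ℝ (Fin n), ∀ a b : ℝ,
      0 ≤ a → 0 ≤ b → a + b = 1 →
      (if ((∀ j, a • x + b • y ∈ Dh j) ∧ (fun j => h j (a • x + b • y)) ∈ Df)
          then (0 : EReal) else ⊤)
        ≤ (a : EReal) * (if ((∀ j, x ∈ Dh j) ∧ (fun j => h j x) ∈ Df)
            then (0 : EReal) else ⊤)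
          + (b : EReal) * (if ((∀ j, y ∈ Dh j) ∧ (fun j => h j y) ∈ Df)
            then (0 : EReal) else ⊤)) :=
  composition_domain_indicator_general f Df hDf h Dh hDh hcomp
end

section
/- If x* is optimal for the convexified problem minimize f₀(x) − ĝ₀(x; x₀) subject to fᵢ(x) − ĝᵢ(x; x₀) ≤ 0, and x* is feasible, then the true objective satisfies f₀(x*) − g₀(x*) ≤ f₀(x₀) − g₀(x₀) whenever x₀ is feasible for the convexified problem; i.e., basic CCP produces nonincreasing objective values. -/
/-!
Convexity makes the linearization `g₀ x₀ + ⟪v₀, x - x₀⟫` a global under-estimator of `g₀` that is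
exact at `x₀`. Hence the convexified objective majorizes `f₀ - g₀` and agrees with it at `x₀`, so
comparing `x*` with the feasible point `x₀` gives the descent.
-/

open Set AffineMap

theorem ConvexOn.add_inner_le_of_hasGradientAt {E : Type*} [NormedAddCommGroup E]
    [InnerProductSpace ℝ E] [CompleteSpace E] {g : E → ℝ} {v x : E}
    (hg : ConvexOn ℝ univ g) (hgrad : HasGradientAt g v x) (y : E) :
    g x + inner ℝ v (y - x) ≤ g y := by
  have hline : ConvexOn ℝ univ (g ∘ lineMap (k := ℝ) x y) := hg.comp_affineMap _
  have hderiv : HasDerivAt (g ∘ lineMap (k := ℝ) x y) (inner ℝ v (y - x)) 0 := by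
    have hfd : HasFDerivAt g (InnerProductSpace.toDual ℝ E v) (lineMap x y (0 : ℝ)) := by
      simpa using hgrad.hasFDerivAt
    simpa using hfd.comp_hasDerivAt (0 : ℝ) hasDerivAt_lineMap
  have hslope := hline.le_slope_of_hasDerivAt (mem_univ 0) (mem_univ 1) zero_lt_one hderiv
  simp only [slope_def_field, Function.comp_apply, lineMap_apply_one, lineMap_apply_zero,
    sub_zero, div_one] at hslope
  linarith

theorem ccp_descent_general {n m : ℕ}
    (f0 g0 : EuclideanSpace ℝ (Fin n) → ℝ)
    (f g : Fin m → EuclideanSpace ℝ (Fin n) → ℝ)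
    (v0 : EuclideanSpace ℝ (Fin n)) (v : Fin m → EuclideanSpace ℝ (Fin n))
    (x0 xstar : EuclideanSpace ℝ (Fin n))
    (hg0 : ConvexOn ℝ Set.univ g0)
    (hgrad0 : HasGradientAt g0 v0 x0)
    (hxstar_opt : ∀ y : EuclideanSpace ℝ (Fin n),
      (∀ i, f i y - (g i x0 + inner ℝ (v i) (y - x0)) ≤ 0) →
      f0 xstar - (g0 x0 + inner ℝ v0 (xstar - x0))
        ≤ f0 y - (g0 x0 + inner ℝ v0 (y - x0)))
    (hx0_feas : ∀ i, f i x0 - (g i x0 + inner ℝ (v i) (x0 - x0)) ≤ 0) :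
    f0 xstar - g0 xstar ≤ f0 x0 - g0 x0 := by
  have hopt := hxstar_opt x0 hx0_feas
  simp only [sub_self, inner_zero_right, add_zero] at hopt
  have hsupport := hg0.add_inner_le_of_hasGradientAt hgrad0 xstar
  linarith

theorem ccp_descent {n m : ℕ}
    (f0 g0 : EuclideanSpace ℝ (Fin n) → ℝ)
    (f g : Fin m → EuclideanSpace ℝ (Fin n) → ℝ)
    (v0 : EuclideanSpace ℝ (Fin n)) (v : Fin m → EuclideanSpace ℝ (Fin n))
    (x0 xstar : EuclideanSpace ℝ (Fin n))
    (hf0 : ConvexOn ℝ Set.univ f0) (hg0 : ConvexOn ℝ Set.univ g0)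
    (hf : ∀ i, ConvexOn ℝ Set.univ (f i)) (hg : ∀ i, ConvexOn ℝ Set.univ (g i))
    (hgrad0 : HasGradientAt g0 v0 x0)
    (hgrad : ∀ i, HasGradientAt (g i) (v i) x0)
    (hxstar_feas : ∀ i, f i xstar - (g i x0 + inner ℝ (v i) (xstar - x0)) ≤ 0)
    (hxstar_opt : ∀ y : EuclideanSpace ℝ (Fin n),
      (∀ i, f i y - (g i x0 + inner ℝ (v i) (y - x0)) ≤ 0) →
      f0 xstar - (g0 x0 + inner ℝ v0 (xstar - x0))
        ≤ f0 y - (g0 x0 + inner ℝ v0 (y - x0)))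
    (hx0_feas : ∀ i, f i x0 - (g i x0 + inner ℝ (v i) (x0 - x0)) ≤ 0) :
    f0 xstar - g0 xstar ≤ f0 x0 - g0 x0 :=
  ccp_descent_general f0 g0 f g v0 v x0 xstar hg0 hgrad0 hxstar_opt hx0_feas
end
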